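/- Suppose σ_i ≥ 1 for all 1 ≤ i ≤ r, and suppose k > 1 is such that σ_k is tight, i.e., σ_k = 1 + σ_1 + ⋯ + σ_{k−1}. Then the vector v = −e_k + e_{k−1} + ⋯ + e_2 + 2e_1 lies in L and is irreducible. -/

import Mathlib

open Finset

/-- The standard basis vector `e j` of `ℤ^{r+2}`, realised as a function
`ℤ → ℤ` (only indices `-1, 0, 1, …, r` are used). -/
def stdE (j : ℤ) : ℤ → ℤ := fun i => if i = j then 1 else 0

/-- The vector `σ = e₀ + σ₁e₁ + ⋯ + σᵣeᵣ`. -/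
def sigmaVec (r : ℤ) (σ : ℤ → ℤ) : ℤ → ℤ :=
  fun i => if i = 0 then 1 else if 1 ≤ i ∧ i ≤ r then σ i else 0

/-- The vector `ρ = e₋₁ − e₀`. -/
def rhoVec : ℤ → ℤ := fun i => stdE (-1) i - stdE 0 i

/-- The standard inner product on `ℤ^{r+2}` (coordinates `-1, 0, 1, …, r`). -/
noncomputable def ip (r : ℤ) (x y : ℤ → ℤ) : ℤ := ∑ i ∈ Finset.Icc (-1) r, x i * y i

/-- The change-maker condition on `σ₁, …, σᵣ`:
`0 ≤ σ₁ ≤ 1` and `σ_{i−1} ≤ σ_i ≤ σ₁ + ⋯ + σ_{i−1} + 1` for `1 < i ≤ r`. -/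
def ChangeMaker (r : ℤ) (σ : ℤ → ℤ) : Prop :=
  0 ≤ σ 1 ∧ σ 1 ≤ 1 ∧ ∀ i, 1 < i → i ≤ r →
    σ (i - 1) ≤ σ i ∧ σ i ≤ (∑ j ∈ Finset.Icc 1 (i - 1), σ j) + 1

/-- Membership in the change-maker lattice
`L = {v ∈ ℤ^{r+2} : v·σ = v·ρ = 0}`. -/
def memCM (r : ℤ) (σ : ℤ → ℤ) (x : ℤ → ℤ) : Prop :=
  (∀ i, i ∉ Finset.Icc (-1) r → x i = 0) ∧
    ip r x (sigmaVec r σ) = 0 ∧ ip r x rhoVec = 0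

/-- A vector `v ∈ L` is irreducible if there are no nonzero `x, y ∈ L` with
`v = x + y` and `x·y ≥ 0`. -/
def IrredCM (r : ℤ) (σ : ℤ → ℤ) (v : ℤ → ℤ) : Prop :=
  ¬ ∃ x y : ℤ → ℤ, memCM r σ x ∧ memCM r σ y ∧ x ≠ 0 ∧ y ≠ 0 ∧
    v = x + y ∧ 0 ≤ ip r x y

/-- A subset `S` of `ℤ^{r+2}` is indecomposable if it is not an orthogonal
direct sum of two nonzero subgroups. -/
def IndecompCM (r : ℤ) (S : Set (ℤ → ℤ)) : Prop :=
  ¬ ∃ L1 L2 : AddSubgroup (ℤ → ℤ), (L1 : Set (ℤ → ℤ)) ⊆ S ∧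
    (L2 : Set (ℤ → ℤ)) ⊆ S ∧ L1 ≠ ⊥ ∧ L2 ≠ ⊥ ∧ L1 ⊓ L2 = ⊥ ∧
    (∀ x ∈ S, ∃ a ∈ L1, ∃ b ∈ L2, x = a + b) ∧
    (∀ x ∈ L1, ∀ y ∈ L2, ip r x y = 0)

/-!
Write `v = x + y` with `x·y ≥ 0`; then `x·x ≤ x·v` and `y·y ≤ y·v`. For `z ∈ L` (so `z₋₁ = z₀`)
the inequality `z·z ≤ z·v` reads
`2z₀² + (z₁ - 1)² + ∑_{1<j<k} z_j(z_j - 1) + z_k(z_k + 1) + ∑_{j>k} z_j² ≤ 1`,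
a sum of non-negative integers. Hence `z_k ∈ {0, -1}`, and as `x_k + y_k = -1` one of `x, y`,
say `z`, vanishes at `k`. For it `z₀ = 0`, `z_j ∈ {0, 1}` for `1 < j < k`, and the tail of `z` is
either zero or a single `±e_m` with `m > k`, in which case `z₁ = 1`. A tail `-e_m` would give
`σ_m = 1 + ∑_{1<j<k} z_j σ_j < σ_k ≤ σ_m` by `z·σ = 0` and tightness. So every term of
`z·σ = z₁ + ∑ z_j σ_j + ∑_{j>k} z_j σ_j` is non-negative, hence zero, which forces `z·v ≤ 0`
and so `z = 0`.
-/

variable {r k : ℤ} {σ v x y z : ℤ → ℤ}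

lemma mul_self_sub_self_nonneg (n : ℤ) : 0 ≤ n * n - n := by
  nlinarith [Int.le_self_sq n]

lemma eq_zero_or_eq_one_of_mul_self_sub_self_le_one {n : ℤ} (h : n * n - n ≤ 1) :
    n = 0 ∨ n = 1 := by
  have : 0 ≤ n := by nlinarith
  have : n ≤ 1 := by nlinarith
  omega

lemma Finset.eq_zero_or_exists_single_of_sum_mul_self_le_one {ι : Type*} {s : Finset ι}
    {f : ι → ℤ} (h : ∑ i ∈ s, f i * f i ≤ 1) :
    (∀ i ∈ s, f i = 0) ∨ ∃ m ∈ s, f m * f m = 1 ∧ ∀ i ∈ s, i ≠ m → f i = 0 := by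
  classical
  by_cases hzero : ∀ i ∈ s, f i = 0
  · exact Or.inl hzero
  push Not at hzero
  obtain ⟨m, hm, hfm⟩ := hzero
  have hsplit := add_sum_erase s (fun i => f i * f i) hm
  have hfm_sq : 0 < f m * f m := mul_self_pos.mpr hfm
  have hrest_nonneg : 0 ≤ ∑ i ∈ s.erase m, f i * f i := sum_nonneg fun i _ => mul_self_nonneg _
  have hrest : ∑ i ∈ s.erase m, f i * f i = 0 := by omega
  refine Or.inr ⟨m, hm, by omega, fun i hi him => ?_⟩
  exact mul_self_eq_zero.mp
    ((sum_eq_zero_iff_of_nonneg fun i _ => mul_self_nonneg _).mp hrest i (mem_erase.mpr ⟨him, hi⟩))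

lemma sum_Icc_one_eq_add_sum_Icc_two (hk1 : 1 < k) (f : ℤ → ℤ) :
    ∑ j ∈ Icc 1 (k - 1), f j = f 1 + ∑ j ∈ Icc 2 (k - 1), f j := by
  rw [← insert_Icc_add_one_left_eq_Icc (by omega), sum_insert (by simp)]
  rfl

lemma sum_Icc_neg_one_eq (hk1 : 1 < k) (hkr : k ≤ r) (f : ℤ → ℤ) :
    ∑ i ∈ Icc (-1) r, f i = f (-1) + f 0 + f 1 + ∑ i ∈ Icc 2 (k - 1), f i + f k
      + ∑ i ∈ Icc (k + 1) r, f i := by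
  have hhead : Icc (-1) r = {-1, 0, 1} ∪ Icc 2 r := by ext; simp; omega
  have htail : Icc 2 r = Icc 2 (k - 1) ∪ insert k (Icc (k + 1) r) := by ext; simp; omega
  rw [hhead, htail, sum_union, sum_union, sum_insert, sum_pair, sum_insert]
  · ring
  all_goals simp [disjoint_left]
  all_goals omega

lemma ChangeMaker.monotoneOn (hcm : ChangeMaker r σ) : MonotoneOn σ (Set.Icc 1 r) :=
  monotoneOn_of_le_add_one Set.ordConnected_Icc fun a _ ha ha' => by
    simpa using (hcm.2.2 (a + 1) (by simp at ha; omega) ha'.2).1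

lemma sum_mul_stdE {s : Finset ℤ} {j : ℤ} (hj : j ∈ s) (z : ℤ → ℤ) :
    ∑ i ∈ s, z i * stdE j i = z j := by
  simp [stdE, hj]

lemma ip_comm (x y : ℤ → ℤ) : ip r x y = ip r y x := by
  simp only [ip, mul_comm]

lemma ip_add_right (x y z : ℤ → ℤ) : ip r x (y + z) = ip r x y + ip r x z := by
  simp only [ip, Pi.add_apply, mul_add, sum_add_distrib]

lemma ip_self_le_ip_of_add_eq (hv : v = x + y) (hxy : 0 ≤ ip r x y) : ip r x x ≤ ip r x v := by
  rw [hv, ip_add_right]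
  linarith

lemma eq_zero_of_ip_self_nonpos (hsupp : ∀ i, i ∉ Icc (-1) r → z i = 0) (h : ip r z z ≤ 0) :
    z = 0 := by
  have hsq := (sum_eq_zero_iff_of_nonneg fun i _ => mul_self_nonneg (z i)).mp
    (le_antisymm h (sum_nonneg fun i _ => mul_self_nonneg (z i)))
  funext i
  by_cases hi : i ∈ Icc (-1) r
  · exact mul_self_eq_zero.mp (hsq i hi)
  · exact hsupp i hi

lemma ip_rhoVec (hr : 0 ≤ r) (z : ℤ → ℤ) : ip r z rhoVec = z (-1) - z 0 := by
  simp only [ip, rhoVec, mul_sub, sum_sub_distrib]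
  rw [sum_mul_stdE (by simp; omega), sum_mul_stdE (by simp; omega)]

lemma rhoVec_apply_of_pos {j : ℤ} (h1 : 1 ≤ j) : rhoVec j = 0 := by
  simp [rhoVec, stdE, show j ≠ -1 by omega, show j ≠ 0 by omega]

lemma sigmaVec_apply_of_pos {j : ℤ} (h1 : 1 ≤ j) (hr : j ≤ r) : sigmaVec r σ j = σ j := by
  simp [sigmaVec, show j ≠ 0 by omega, h1, hr]

lemma ip_sigmaVec (hk1 : 1 < k) (hkr : k ≤ r) (z : ℤ → ℤ) :
    ip r z (sigmaVec r σ) = z 0 + z 1 * σ 1 + ∑ j ∈ Icc 2 (k - 1), z j * σ j + z k * σ k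
      + ∑ j ∈ Icc (k + 1) r, z j * σ j := by
  have hblock {j : ℤ} (hj : j ∈ Icc 2 (k - 1) ∪ Icc (k + 1) r) :
      z j * sigmaVec r σ j = z j * σ j := by
    simp only [mem_union, mem_Icc] at hj
    rw [sigmaVec_apply_of_pos (by omega) (by omega)]
  rw [ip, sum_Icc_neg_one_eq hk1 hkr, sum_congr rfl fun j hj => hblock (mem_union_left _ hj),
    sum_congr rfl fun j hj => hblock (mem_union_right _ hj),
    sigmaVec_apply_of_pos le_rfl (by omega), sigmaVec_apply_of_pos (by omega) hkr]
  simp [sigmaVec]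

noncomputable def tightVec (k : ℤ) : ℤ → ℤ := fun i =>
  -(stdE k i) + (∑ j ∈ Icc 2 (k - 1), stdE j i) + 2 * stdE 1 i

lemma tightVec_apply_of_notMem (hk1 : 1 < k) {i : ℤ} (hi : i ∉ Icc 1 k) : tightVec k i = 0 := by
  simp only [mem_Icc] at hi
  simp only [tightVec, stdE, sum_ite_eq, mem_Icc]
  split_ifs <;> omega

lemma tightVec_apply_self (hk1 : 1 < k) : tightVec k k = -1 := by
  simp only [tightVec, stdE, sum_ite_eq, mem_Icc]
  split_ifs <;> omega

lemma ip_tightVec (hk1 : 1 < k) (hkr : k ≤ r) (z : ℤ → ℤ) :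
    ip r z (tightVec k) = 2 * z 1 + ∑ j ∈ Icc 2 (k - 1), z j - z k := by
  have hmem : ∀ j ∈ Icc 2 (k - 1), j ∈ Icc (-1) r := fun j hj => by
    simp only [mem_Icc] at hj ⊢; omega
  simp only [ip, tightVec, mul_add, mul_neg, mul_sum, sum_add_distrib, sum_neg_distrib]
  rw [sum_comm, sum_congr rfl fun j hj => sum_mul_stdE (hmem j hj) z]
  simp only [mul_left_comm _ (2 : ℤ), ← mul_sum]
  rw [sum_mul_stdE (by simp; omega), sum_mul_stdE (by simp; omega)]
  ring

lemma memCM_tightVec (hk1 : 1 < k) (hkr : k ≤ r) (hσ1 : σ 1 = 1)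
    (htight : σ k = 1 + ∑ j ∈ Icc 1 (k - 1), σ j) : memCM r σ (tightVec k) := by
  refine ⟨fun i hi => tightVec_apply_of_notMem hk1 ?_, ?_, ?_⟩
  · simp only [mem_Icc] at hi ⊢; omega
  · rw [ip_comm, ip_tightVec hk1 hkr, sigmaVec_apply_of_pos le_rfl (by omega),
      sigmaVec_apply_of_pos (by omega) hkr,
      sum_congr rfl fun j hj => sigmaVec_apply_of_pos (by simp at hj; omega) (by simp at hj; omega),
      htight, sum_Icc_one_eq_add_sum_Icc_two hk1, hσ1]
    ring
  · rw [ip_comm, ip_tightVec hk1 hkr, rhoVec_apply_of_pos le_rfl, rhoVec_apply_of_pos (by omega),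
      sum_eq_zero fun j hj => rhoVec_apply_of_pos (by simp at hj; omega)]
    ring

lemma blocks_le_one_of_ip_self_le (hk1 : 1 < k) (hkr : k ≤ r) (hz : memCM r σ z)
    (hle : ip r z z ≤ ip r z (tightVec k)) :
    2 * (z 0 * z 0) + (z 1 - 1) * (z 1 - 1) + ∑ j ∈ Icc 2 (k - 1), (z j * z j - z j)
      + (z k * z k + z k) + ∑ j ∈ Icc (k + 1) r, z j * z j ≤ 1 := by
  have hρ : z (-1) = z 0 := by
    have := hz.2.2
    rw [ip_rhoVec (by omega)] at this
    omega
  rw [ip_tightVec hk1 hkr, ip, sum_Icc_neg_one_eq hk1 hkr, hρ] at hle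
  rw [sum_sub_distrib]
  linarith

lemma apply_eq_zero_or_eq_neg_one_of_ip_self_le (hk1 : 1 < k) (hkr : k ≤ r)
    (hz : memCM r σ z) (hle : ip r z z ≤ ip r z (tightVec k)) : z k = 0 ∨ z k = -1 := by
  have hB := blocks_le_one_of_ip_self_le hk1 hkr hz hle
  have hmid : 0 ≤ ∑ j ∈ Icc 2 (k - 1), (z j * z j - z j) :=
    sum_nonneg fun j _ => mul_self_sub_self_nonneg _
  have htail : 0 ≤ ∑ j ∈ Icc (k + 1) r, z j * z j := sum_nonneg fun j _ => mul_self_nonneg _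
  have := eq_zero_or_eq_one_of_mul_self_sub_self_le_one (n := -z k)
    (by nlinarith [mul_self_nonneg (z 0), mul_self_nonneg (z 1 - 1)])
  omega

lemma sum_tail_mul_nonneg (hcm : ChangeMaker r σ) (hk1 : 1 < k) (hkr : k ≤ r) (hσ1 : σ 1 = 1)
    (htight : σ k = 1 + ∑ j ∈ Icc 1 (k - 1), σ j)
    (hmid : ∑ j ∈ Icc 2 (k - 1), z j * σ j ≤ ∑ j ∈ Icc 2 (k - 1), σ j)
    (hσeq : z 1 + ∑ j ∈ Icc 2 (k - 1), z j * σ j + ∑ j ∈ Icc (k + 1) r, z j * σ j = 0)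
    (hB : (z 1 - 1) * (z 1 - 1) + ∑ j ∈ Icc (k + 1) r, z j * z j ≤ 1) :
    0 ≤ ∑ j ∈ Icc (k + 1) r, z j * σ j := by
  have htail_le : ∑ j ∈ Icc (k + 1) r, z j * z j ≤ 1 := by
    nlinarith [mul_self_nonneg (z 1 - 1)]
  rcases eq_zero_or_exists_single_of_sum_mul_self_le_one htail_le with hzero | ⟨m, hm, hzm, hrest⟩
  · exact (sum_eq_zero fun j hj => by rw [hzero j hj, zero_mul]).ge
  have hsingle (g : ℤ → ℤ) : ∑ j ∈ Icc (k + 1) r, z j * g j = z m * g m :=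
    sum_eq_single_of_mem m hm fun j hj hjm => by rw [hrest j hj hjm, zero_mul]
  rw [hsingle z, hzm] at hB
  have hz1 : z 1 = 1 := by nlinarith [mul_self_nonneg (z 1 - 1)]
  rw [hsingle σ] at hσeq ⊢
  rw [hz1] at hσeq
  simp only [mem_Icc] at hm
  have hσkm : σ k ≤ σ m := hcm.monotoneOn ⟨by omega, hkr⟩ ⟨by omega, hm.2⟩ (by omega)
  rw [sum_Icc_one_eq_add_sum_Icc_two hk1, hσ1] at htight
  rcases mul_self_eq_one_iff.mp hzm with h | h <;> rw [h] at hσeq ⊢ <;> linarith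

lemma eq_zero_of_ip_self_le_of_apply_eq_zero (hcm : ChangeMaker r σ)
    (hpos : ∀ i, 1 ≤ i → i ≤ r → 1 ≤ σ i) (hk1 : 1 < k) (hkr : k ≤ r) (hσ1 : σ 1 = 1)
    (htight : σ k = 1 + ∑ j ∈ Icc 1 (k - 1), σ j) (hz : memCM r σ z)
    (hle : ip r z z ≤ ip r z (tightVec k)) (hk0 : z k = 0) : z = 0 := by
  have hB := blocks_le_one_of_ip_self_le hk1 hkr hz hle
  rw [hk0] at hB
  have hmid_nonneg : 0 ≤ ∑ j ∈ Icc 2 (k - 1), (z j * z j - z j) :=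
    sum_nonneg fun j _ => mul_self_sub_self_nonneg _
  have htail_nonneg : 0 ≤ ∑ j ∈ Icc (k + 1) r, z j * z j := sum_nonneg fun j _ => mul_self_nonneg _
  have hz0 : z 0 = 0 := by nlinarith [mul_self_nonneg (z 0), mul_self_nonneg (z 1 - 1)]
  have hz1 : 0 ≤ z 1 := by nlinarith [mul_self_nonneg (z 0)]
  have hmid (j : ℤ) (hj : j ∈ Icc 2 (k - 1)) : 0 ≤ z j ∧ z j ≤ z j * σ j ∧ z j * σ j ≤ σ j := by
    have hσj := hpos j (by simp at hj; omega) (by simp at hj; omega)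
    have hzj : z j * z j - z j ≤ 1 := by
      have := single_le_sum (f := fun j => z j * z j - z j)
        (fun j _ => mul_self_sub_self_nonneg _) hj
      nlinarith [mul_self_nonneg (z 0), mul_self_nonneg (z 1 - 1)]
    rcases eq_zero_or_eq_one_of_mul_self_sub_self_le_one hzj with h | h <;> rw [h] <;> omega
  have hσeq := hz.2.1
  rw [ip_sigmaVec hk1 hkr, hz0, hk0, hσ1] at hσeq
  have htail := sum_tail_mul_nonneg hcm hk1 hkr hσ1 htight
    (sum_le_sum fun j hj => (hmid j hj).2.2) (by linarith) (by nlinarith [mul_self_nonneg (z 0)])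
  have hmid_pos : 0 ≤ ∑ j ∈ Icc 2 (k - 1), z j := sum_nonneg fun j hj => (hmid j hj).1
  have hmid_le : ∑ j ∈ Icc 2 (k - 1), z j ≤ ∑ j ∈ Icc 2 (k - 1), z j * σ j :=
    sum_le_sum fun j hj => (hmid j hj).2.1
  refine eq_zero_of_ip_self_nonpos hz.1 ?_
  rw [ip_tightVec hk1 hkr, hk0] at hle
  linarith

theorem stmt12_general (r : ℤ) (σ : ℤ → ℤ) (hcm : ChangeMaker r σ)
    (hpos : ∀ i, 1 ≤ i → i ≤ r → 1 ≤ σ i)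
    (k : ℤ) (hk1 : 1 < k) (hkr : k ≤ r)
    (htight : σ k = 1 + ∑ j ∈ Finset.Icc 1 (k - 1), σ j)
    (v : ℤ → ℤ)
    (hv : v = fun i =>
      -(stdE k i) + (∑ j ∈ Finset.Icc 2 (k - 1), stdE j i) + 2 * stdE 1 i) :
    memCM r σ v ∧ IrredCM r σ v := by
  have hσ1 : σ 1 = 1 := le_antisymm hcm.2.1 (hpos 1 le_rfl (by omega))
  change v = tightVec k at hv
  subst hv
  refine ⟨memCM_tightVec hk1 hkr hσ1 htight, ?_⟩
  rintro ⟨x, y, hx, hy, hx0, hy0, hxy, hxy_nonneg⟩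
  have hxle := ip_self_le_ip_of_add_eq hxy hxy_nonneg
  have hyle := ip_self_le_ip_of_add_eq (hxy.trans (add_comm x y)) (ip_comm x y ▸ hxy_nonneg)
  have hsum : x k + y k = -1 := by rw [← tightVec_apply_self hk1, hxy]; rfl
  rcases apply_eq_zero_or_eq_neg_one_of_ip_self_le hk1 hkr hx hxle with h | h
  · exact hx0 (eq_zero_of_ip_self_le_of_apply_eq_zero hcm hpos hk1 hkr hσ1 htight hx hxle h)
  · exact hy0 (eq_zero_of_ip_self_le_of_apply_eq_zero hcm hpos hk1 hkr hσ1 htight hy hyle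
      (by omega))

/-- Suppose `σᵢ ≥ 1` for all `1 ≤ i ≤ r` and `σ_k` is tight for some `k > 1`,
i.e. `σ_k = 1 + σ₁ + ⋯ + σ_{k−1}`.  Then the vector
`v = −e_k + e_{k−1} + ⋯ + e₂ + 2e₁` lies in `L` and is irreducible. -/
theorem stmt12 (r : ℤ) (hr : 1 ≤ r) (σ : ℤ → ℤ) (hcm : ChangeMaker r σ)
    (hpos : ∀ i, 1 ≤ i → i ≤ r → 1 ≤ σ i)
    (k : ℤ) (hk1 : 1 < k) (hkr : k ≤ r)
    (htight : σ k = 1 + ∑ j ∈ Finset.Icc 1 (k - 1), σ j)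
    (v : ℤ → ℤ)
    (hv : v = fun i =>
      -(stdE k i) + (∑ j ∈ Finset.Icc 2 (k - 1), stdE j i) + 2 * stdE 1 i) :
    memCM r σ v ∧ IrredCM r σ v :=
  stmt12_general r σ hcm hpos k hk1 hkr htight v hv
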